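/- Let Γ = (H, V, i, f, g) be a dual graph with edge contraction Contr Γ = (H', V', g'). Then the total genus is preserved: if Γ is connected, 2·g(Contr Γ) − 2 + n(Contr Γ) = Σ_{v ∈ V} (2g(v) − 2 + n(v)) + 2·|E(Γ)|, where g(Contr Γ) denotes the genus of the single vertex of the contracted graph when all edges are contracted, n denotes the number of legs, and |E(Γ)| the number of edges. Equivalently, for a connected graph with first Betti number b₁(Γ), the genus of the fully contracted graph equals b₁(Γ) + Σ_{v ∈ V} g(v). -/

import Mathlib

/-! Summing `2g(v) - 2 + n(v)` over the vertices counts every half-edge exactly once, and the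
half-edges split into the legs and two half-edges per edge. Hence the defining equation of `g'`
becomes `2g' - 2 + legs = 2 ∑ g(v) - 2|V| + legs + 2 edges`, which is the claim halved. -/

open Finset

section DualGraph

variable {H V : Type} [Fintype H] [Fintype V]

lemma card_fixed_add_card_not_fixed [DecidableEq H] (ι : H → H) :
    #{h | ι h = h} + #{h | ι h ≠ h} = Fintype.card H :=
  card_filter_add_card_filter_not _

lemma sum_card_fiber_eq_card [DecidableEq V] (f : H → V) :
    ∑ v, #{h | f h = v} = Fintype.card H :=
  (card_eq_sum_card_fiberwise fun h _ => mem_univ (f h)).symm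

lemma sum_euler_char_eq [DecidableEq V] (f : H → V) (g : V → ℕ) :
    ∑ v, (2 * (g v : ℤ) - 2 + (#{h | f h = v} : ℤ)) =
      2 * ∑ v, (g v : ℤ) - 2 * Fintype.card V + Fintype.card H := by
  rw [sum_add_distrib, sum_sub_distrib, ← mul_sum,
    ← Nat.cast_sum (s := univ) (f := fun v => #{h | f h = v}), sum_card_fiber_eq_card]
  simp [mul_comm]

end DualGraph

theorem stmt_0_general (H V : Type) [Fintype H] [DecidableEq H] [Fintype V] [DecidableEq V]
    (ι : H → H) (f : H → V) (g : V → ℕ)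
    (legs edges : ℕ)
    (hlegs : legs = (Finset.univ.filter fun h : H => ι h = h).card)
    (hedges : 2 * edges = (Finset.univ.filter fun h : H => ι h ≠ h).card)
    (g' : ℕ)
    (hg' : 2 * (g' : ℤ) - 2 + (legs : ℤ) =
      ∑ v : V, (2 * (g v : ℤ) - 2 + ((Finset.univ.filter fun h : H => f h = v).card : ℤ))) :
    (g' : ℤ) = ((edges : ℤ) - Fintype.card V + 1) + ∑ v : V, (g v : ℤ) := by
  have hsplit : (legs : ℤ) + 2 * edges = Fintype.card H := by
    rw [← card_fixed_add_card_not_fixed ι, ← hlegs, ← hedges]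
    push_cast; rfl
  rw [sum_euler_char_eq] at hg'
  linarith

/-- For a connected dual graph, the genus `g'` of the fully contracted graph,
defined by `2g' - 2 + #legs = ∑_v (2 g(v) - 2 + n(v))`, equals
`b₁(Γ) + ∑_v g(v)` where `b₁(Γ) = #edges - #vertices + 1`. -/
theorem stmt_0 (H V : Type) [Fintype H] [DecidableEq H] [Fintype V] [DecidableEq V]
    (ι : H → H) (hι : ∀ h, ι (ι h) = h) (f : H → V) (g : V → ℕ)
    (hconn : ∀ a b : V, Relation.ReflTransGen (fun x y => ∃ h : H, f h = x ∧ f (ι h) = y) a b)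
    (legs edges : ℕ)
    (hlegs : legs = (Finset.univ.filter fun h : H => ι h = h).card)
    (hedges : 2 * edges = (Finset.univ.filter fun h : H => ι h ≠ h).card)
    (g' : ℕ)
    (hg' : 2 * (g' : ℤ) - 2 + (legs : ℤ) =
      ∑ v : V, (2 * (g v : ℤ) - 2 + ((Finset.univ.filter fun h : H => f h = v).card : ℤ))) :
    (g' : ℤ) = ((edges : ℤ) - Fintype.card V + 1) + ∑ v : V, (g v : ℤ) :=
  stmt_0_general H V ι f g legs edges hlegs hedges g' hg'
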